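/- arXiv:2212.11111 — 3 statements merged into one kernel-verified Lean document; each statement's English description precedes it below -/
import Mathlib

section
/- Let 𝒜 = 𝒜_i + 𝒜_e be bounded linear operators on a Hilbert space W, with 𝒜 coercive with constant α_𝒜 > 0 and 𝒜_e bounded with norm ‖𝒜_e‖. Suppose the iterates satisfy 𝒜_i w^{k+1} + 𝒜_e w^k = f, where 𝒜 w = f. If α_𝒜 > 2‖𝒜_e‖, then the iteration converges: w^k → w. -/
open scoped RealInnerProductSpace
open Filter Topology

/-!
The error `e^k = w - w^k` satisfies `𝒜 e^{k+1} = 𝒜_e (e^{k+1} - e^k)`. Testing this with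
`e^{k+1}` and using coercivity gives `α ‖e^{k+1}‖ ≤ ‖𝒜_e‖ (‖e^{k+1}‖ + ‖e^k‖)`, i.e.
`‖e^{k+1}‖ ≤ ρ ‖e^k‖` with `ρ = ‖𝒜_e‖ / (α - ‖𝒜_e‖)`, and `ρ < 1` exactly when `α > 2‖𝒜_e‖`.
-/

theorem tendsto_of_dist_succ_le_mul_dist {X : Type*} [PseudoMetricSpace X] {u : ℕ → X} {x : X}
    {ρ : ℝ} (hρ₀ : 0 ≤ ρ) (hρ₁ : ρ < 1) (h : ∀ k, dist (u (k + 1)) x ≤ ρ * dist (u k) x) :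
    Tendsto u atTop (𝓝 x) := by
  have hgeom : ∀ k, dist (u k) x ≤ ρ ^ k * dist (u 0) x := fun k =>
    le_geom (u := fun k => dist (u k) x) hρ₀ k fun j _ => h j
  have hlim : Tendsto (fun k => ρ ^ k * dist (u 0) x) atTop (𝓝 0) := by
    simpa using (tendsto_pow_atTop_nhds_zero_of_lt_one hρ₀ hρ₁).mul_const (dist (u 0) x)
  exact tendsto_iff_dist_tendsto_zero.2 (squeeze_zero (fun _ => dist_nonneg) hgeom hlim)

section InnerProduct

variable {W : Type*} [NormedAddCommGroup W] [InnerProductSpace ℝ W]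

theorem mul_norm_le_norm_of_mul_sq_le_inner {α : ℝ} {v x : W} (h : α * ‖x‖ ^ 2 ≤ ⟪v, x⟫) :
    α * ‖x‖ ≤ ‖v‖ := by
  rcases (norm_nonneg x).eq_or_lt with hx | hx
  · simp [← hx]
  · refine le_of_mul_le_mul_right ?_ hx
    calc α * ‖x‖ * ‖x‖ = α * ‖x‖ ^ 2 := by ring
      _ ≤ ⟪v, x⟫ := h
      _ ≤ ‖v‖ * ‖x‖ := real_inner_le_norm v x

theorem norm_le_div_mul_norm_of_mul_sq_le_inner {B : W →L[ℝ] W} {α : ℝ} {x y : W}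
    (hB : ‖B‖ < α) (h : α * ‖x‖ ^ 2 ≤ ⟪B (x - y), x⟫) :
    ‖x‖ ≤ ‖B‖ / (α - ‖B‖) * ‖y‖ := by
  have hαx : α * ‖x‖ ≤ ‖B‖ * (‖x‖ + ‖y‖) :=
    calc α * ‖x‖ ≤ ‖B (x - y)‖ := mul_norm_le_norm_of_mul_sq_le_inner h
      _ ≤ ‖B‖ * ‖x - y‖ := B.le_opNorm _
      _ ≤ ‖B‖ * (‖x‖ + ‖y‖) := by gcongr; exact norm_sub_le x y
  rw [div_mul_eq_mul_div, le_div_iff₀ (sub_pos.2 hB)]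
  linarith

end InnerProduct

theorem splitting_error_eq {M N F : Type*} [AddCommGroup M] [AddCommGroup N] [FunLike F M N]
    [AddMonoidHomClass F M N] {Ai Ae : F} {f : N} {x x' y : M}
    (hy : Ai y + Ae y = f) (hx : Ai x' + Ae x = f) :
    Ai (y - x') + Ae (y - x') = Ae ((y - x') - (y - x)) := by
  rw [sub_sub_sub_cancel_left, map_sub, map_sub, map_sub]
  linear_combination (norm := abel) hy - hx

theorem splitting_iteration_converges_general {W : Type*} [NormedAddCommGroup W]
    [InnerProductSpace ℝ W]
    (Ai Ae : W →L[ℝ] W) (αA : ℝ)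
    (hcoer : ∀ x : W, ⟪(Ai + Ae) x, x⟫ ≥ αA * ‖x‖ ^ 2)
    (f wex : W) (hex : (Ai + Ae) wex = f)
    (w : ℕ → W) (hit : ∀ k : ℕ, Ai (w (k + 1)) + Ae (w k) = f)
    (hcond : αA > 2 * ‖Ae‖) :
    Filter.Tendsto w Filter.atTop (nhds wex) := by
  have hAe : ‖Ae‖ < αA := by linarith [norm_nonneg Ae]
  have hρ₁ : ‖Ae‖ / (αA - ‖Ae‖) < 1 := (div_lt_one (sub_pos.2 hAe)).2 (by linarith)
  refine tendsto_of_dist_succ_le_mul_dist (by positivity) hρ₁ fun k => ?_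
  rw [dist_eq_norm', dist_eq_norm']
  refine norm_le_div_mul_norm_of_mul_sq_le_inner hAe ?_
  rw [← splitting_error_eq (F := W →L[ℝ] W) hex (hit k)]
  exact hcoer _

/-- Convergence of the unrelaxed splitting iteration `𝒜_i w^{k+1} + 𝒜_e w^k = f`, where
`𝒜 = 𝒜_i + 𝒜_e` is coercive with constant `α𝒜 > 2‖𝒜_e‖`. -/
theorem splitting_iteration_converges {W : Type*} [NormedAddCommGroup W]
    [InnerProductSpace ℝ W] [CompleteSpace W]
    (Ai Ae : W →L[ℝ] W) (αA : ℝ) (hαA : 0 < αA)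
    (hcoer : ∀ x : W, ⟪(Ai + Ae) x, x⟫ ≥ αA * ‖x‖ ^ 2)
    (f wex : W) (hex : (Ai + Ae) wex = f)
    (w : ℕ → W) (hit : ∀ k : ℕ, Ai (w (k + 1)) + Ae (w k) = f)
    (hcond : αA > 2 * ‖Ae‖) :
    Filter.Tendsto w Filter.atTop (nhds wex) :=
  splitting_iteration_converges_general Ai Ae αA hcoer f wex hex w hit hcond
end

section
/- Under the hypotheses of the unrelaxed splitting iteration (𝒜 coercive with constant α_𝒜, 𝒜_e bounded), the error satisfies (α_𝒜²/‖𝒜_e‖² − 2)‖e^{k+1}‖² ≤ 2‖e^k‖², so whenever α_𝒜² > 4‖𝒜_e‖² one has the linear contraction ‖e^{k+1}‖ ≤ √(2/(α_𝒜²/‖𝒜_e‖² − 2)) ‖e^k‖. -/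
open scoped RealInnerProductSpace

/-! Testing the error equation `𝒜 e^{k+1} = 𝒜_e(e^{k+1} − e^k)` against `e^{k+1}` and using
coercivity and Cauchy–Schwarz gives `α‖e^{k+1}‖ ≤ ‖𝒜_e‖ ‖e^{k+1} − e^k‖`; squaring and bounding
`‖e^{k+1} − e^k‖² ≤ 2‖e^{k+1}‖² + 2‖e^k‖²` leaves a scalar inequality, which is the estimate. -/

theorem norm_sub_sq_le_two_mul {E : Type*} [SeminormedAddCommGroup E] (x y : E) :
    ‖x - y‖ ^ 2 ≤ 2 * ‖x‖ ^ 2 + 2 * ‖y‖ ^ 2 :=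
  calc ‖x - y‖ ^ 2 ≤ (‖x‖ + ‖y‖) ^ 2 := by gcongr; exact norm_sub_le x y
    _ ≤ 2 * ‖x‖ ^ 2 + 2 * ‖y‖ ^ 2 := by linarith [add_sq_le (a := ‖x‖) (b := ‖y‖)]

theorem mul_norm_le_norm_apply_of_coercive {W : Type*} [NormedAddCommGroup W]
    [InnerProductSpace ℝ W] {A : W →L[ℝ] W} {α : ℝ} (hcoer : ∀ x : W, ⟪A x, x⟫ ≥ α * ‖x‖ ^ 2)
    (x : W) : α * ‖x‖ ≤ ‖A x‖ := by
  rcases (norm_nonneg x).eq_or_lt with hx | hx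
  · rw [← hx, mul_zero]
    exact norm_nonneg _
  · refine le_of_mul_le_mul_right ?_ hx
    calc α * ‖x‖ * ‖x‖ = α * ‖x‖ ^ 2 := by ring
      _ ≤ ⟪A x, x⟫ := hcoer x
      _ ≤ ‖A x‖ * ‖x‖ := real_inner_le_norm _ _

theorem mul_sq_le_of_mul_le_of_sq_le {α c d u v : ℝ} (hα : 0 ≤ α) (hc : 0 < c) (hu : 0 ≤ u)
    (hαu : α * u ≤ c * d) (hd : d ^ 2 ≤ 2 * u ^ 2 + 2 * v ^ 2) :
    (α ^ 2 / c ^ 2 - 2) * u ^ 2 ≤ 2 * v ^ 2 := by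
  have hsq : (α * u) ^ 2 ≤ (c * d) ^ 2 := pow_le_pow_left₀ (by positivity) hαu 2
  have hc2 : 0 < c ^ 2 := by positivity
  rw [sub_mul, div_mul_eq_mul_div, sub_le_iff_le_add, div_le_iff₀ hc2]
  nlinarith

theorem le_sqrt_div_mul_of_mul_sq_le {κ a u v : ℝ} (hκ : 0 < κ) (hv : 0 ≤ v)
    (h : κ * u ^ 2 ≤ a * v ^ 2) : u ≤ Real.sqrt (a / κ) * v := by
  have hsq : u ^ 2 ≤ a / κ * v ^ 2 := by
    rw [div_mul_eq_mul_div, le_div_iff₀ hκ]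
    linarith
  calc u ≤ |u| := le_abs_self u
    _ ≤ Real.sqrt (a / κ * v ^ 2) := Real.abs_le_sqrt hsq
    _ = Real.sqrt (a / κ) * v := by rw [Real.sqrt_mul' _ (by positivity), Real.sqrt_sq hv]

theorem splitting_error_estimate_general {W : Type*} [NormedAddCommGroup W]
    [InnerProductSpace ℝ W]
    (A Ae : W →L[ℝ] W) (αA : ℝ) (hαA : 0 < αA)
    (hcoer : ∀ x : W, ⟪A x, x⟫ ≥ αA * ‖x‖ ^ 2)
    (hAe : 0 < ‖Ae‖)
    (e : ℕ → W) (herr : ∀ k : ℕ, A (e (k + 1)) = Ae (e (k + 1) - e k)) :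
    ∀ k : ℕ,
      (αA ^ 2 / ‖Ae‖ ^ 2 - 2) * ‖e (k + 1)‖ ^ 2 ≤ 2 * ‖e k‖ ^ 2 ∧
      (αA ^ 2 > 4 * ‖Ae‖ ^ 2 →
        ‖e (k + 1)‖ ≤ Real.sqrt (2 / (αA ^ 2 / ‖Ae‖ ^ 2 - 2)) * ‖e k‖) := by
  intro k
  have hstep : αA * ‖e (k + 1)‖ ≤ ‖Ae‖ * ‖e (k + 1) - e k‖ :=
    calc αA * ‖e (k + 1)‖ ≤ ‖A (e (k + 1))‖ := mul_norm_le_norm_apply_of_coercive hcoer _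
      _ ≤ ‖Ae‖ * ‖e (k + 1) - e k‖ := herr k ▸ Ae.le_opNorm _
  have hest := mul_sq_le_of_mul_le_of_sq_le hαA.le hAe (norm_nonneg _) hstep
    (norm_sub_sq_le_two_mul _ _)
  refine ⟨hest, fun hα => le_sqrt_div_mul_of_mul_sq_le ?_ (norm_nonneg _) hest⟩
  rw [sub_pos, lt_div_iff₀ (by positivity)]
  linarith [sq_nonneg ‖Ae‖]

/-- Error estimate for the unrelaxed splitting iteration: from the error equation
`𝒜 e^{k+1} = 𝒜_e(e^{k+1} − e^k)` and coercivity of `𝒜` one gets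
`(α𝒜²/‖𝒜_e‖² − 2)‖e^{k+1}‖² ≤ 2‖e^k‖²`, hence a linear contraction whenever
`α𝒜² > 4‖𝒜_e‖²`. -/
theorem splitting_error_estimate {W : Type*} [NormedAddCommGroup W]
    [InnerProductSpace ℝ W] [CompleteSpace W]
    (A Ae : W →L[ℝ] W) (αA : ℝ) (hαA : 0 < αA)
    (hcoer : ∀ x : W, ⟪A x, x⟫ ≥ αA * ‖x‖ ^ 2)
    (hAe : 0 < ‖Ae‖)
    (e : ℕ → W) (herr : ∀ k : ℕ, A (e (k + 1)) = Ae (e (k + 1) - e k)) :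
    ∀ k : ℕ,
      (αA ^ 2 / ‖Ae‖ ^ 2 - 2) * ‖e (k + 1)‖ ^ 2 ≤ 2 * ‖e k‖ ^ 2 ∧
      (αA ^ 2 > 4 * ‖Ae‖ ^ 2 →
        ‖e (k + 1)‖ ≤ Real.sqrt (2 / (αA ^ 2 / ‖Ae‖ ^ 2 - 2)) * ‖e k‖) :=
  splitting_error_estimate_general A Ae αA hαA hcoer hAe e herr
end

section
/- Let A, B, D, L be bounded linear operators on Hilbert spaces with C = B, A + B and D + B coercive (constants α_{A+B}, α_{D+B} > 0), −B coercive (constant α_B > 0) and B bounded, A coercive (constant α_A > 0), and L self-adjoint and coercive with α_L ≥ ‖B‖⁴/(α_{D+B} α_A²). Then the iteration A u^{k+1} + B v^{k+1} = f₁, B u^k + D v^{k+1} + L(v^{k+1} − v^k) = f₂ converges to the solution of A u + B v = f₁, B u + D v = f₂. -/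
open scoped RealInnerProductSpace
open Filter Topology

/-!
Testing the error equations `A e_u^{k+1} + B e_v^{k+1} = 0` with `e_u^{k+1}` and
`B e_u^k + D e_v^{k+1} + L (e_v^{k+1} - e_v^k) = 0` with `e_v^{k+1}`, the coercivity of
`A + B`, `D + B`, `-B` and the polarization identity for `L` make `⟨L e_v^k, e_v^k⟩` a
Lyapunov function: it drops by at least `α_{D+B} ‖e_v^{k+1}‖² + 2 α_{A+B} ‖e_u^{k+1}‖²` per
step. The only term of the wrong sign is the lag `⟨B (e_u^{k+1} - e_u^k), e_v^{k+1}⟩`. Since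
`A (e_u^{k+1} - e_u^k) = -B (e_v^{k+1} - e_v^k)`, it is at most
`‖B‖²/α_A ‖e_v^{k+1} - e_v^k‖ ‖e_v^{k+1}‖`, and the condition on `α_L` is exactly what lets
Young's inequality absorb it. Telescoping makes the decrements summable.
-/

theorem two_mul_mul_mul_le_of_sq_le_mul {c p q : ℝ} (hp : 0 ≤ p) (hq : 0 ≤ q)
    (hc : c ^ 2 ≤ p * q) (s t : ℝ) : 2 * c * s * t ≤ p * s ^ 2 + q * t ^ 2 := by
  rcases hp.eq_or_lt with rfl | hp
  · have : c = 0 := by nlinarith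
    subst this
    nlinarith
  · refine le_of_mul_le_mul_left ?_ hp
    nlinarith [sq_nonneg (p * s - c * t), mul_nonneg (sub_nonneg.2 hc) (sq_nonneg t)]

theorem tendsto_zero_of_add_mul_sq_norm_le {W : Type*} [SeminormedAddCommGroup W]
    {E : ℕ → ℝ} {c : ℝ} (hE : ∀ k, 0 ≤ E k) (hc : 0 < c) {w : ℕ → W}
    (h : ∀ k, E (k + 1) + c * ‖w k‖ ^ 2 ≤ E k) : Tendsto w atTop (𝓝 0) := by
  have hpartial : ∀ n, ∑ i ∈ Finset.range n, c * ‖w i‖ ^ 2 + E n ≤ E 0 := by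
    intro n
    induction n with
    | zero => simp
    | succ n ih =>
      rw [Finset.sum_range_succ]
      linarith [h n]
  have hsum : Summable fun k => c * ‖w k‖ ^ 2 :=
    summable_of_sum_range_le (c := E 0) (fun k => by positivity) fun n => by
      linarith [hpartial n, hE n]
  have hsq : Tendsto (fun k => ‖w k‖ ^ 2) atTop (𝓝 0) := by
    simpa [hc.ne'] using hsum.tendsto_atTop_zero.div_const c
  rw [tendsto_zero_iff_norm_tendsto_zero]
  simpa [Real.sqrt_sq (norm_nonneg _)] using hsq.sqrt

section

variable {V : Type*} [NormedAddCommGroup V] [InnerProductSpace ℝ V]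

theorem LinearMap.IsSymmetric.two_mul_inner_map_sub {T : V →ₗ[ℝ] V} (hT : T.IsSymmetric)
    (x y : V) :
    2 * ⟪T (x - y), x⟫ = ⟪T x, x⟫ + ⟪T (x - y), x - y⟫ - ⟪T y, y⟫ := by
  have hxy : ⟪T x, y⟫ = ⟪T y, x⟫ := by rw [hT, real_inner_comm]
  simp only [map_sub, inner_sub_left, inner_sub_right]
  linarith

theorem mul_norm_le_norm_apply_of_coercive_s14 {A : V →L[ℝ] V} {α : ℝ}
    (hA : ∀ x, α * ‖x‖ ^ 2 ≤ ⟪A x, x⟫) (z : V) : α * ‖z‖ ≤ ‖A z‖ := by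
  rcases (norm_nonneg z).eq_or_lt with hz | hz
  · rw [← hz, mul_zero]
    exact norm_nonneg _
  · refine le_of_mul_le_mul_right ?_ hz
    calc α * ‖z‖ * ‖z‖ = α * ‖z‖ ^ 2 := by ring
      _ ≤ ⟪A z, z⟫ := hA z
      _ ≤ ‖A z‖ * ‖z‖ := real_inner_le_norm _ _

theorem add_inner_le_block_form {A B D : V →L[ℝ] V} {αAB αDB : ℝ}
    (hAB : ∀ x, αAB * ‖x‖ ^ 2 ≤ ⟪(A + B) x, x⟫) (hDB : ∀ x, αDB * ‖x‖ ^ 2 ≤ ⟪(D + B) x, x⟫)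
    (hB : ∀ x, 0 ≤ ⟪(-B) x, x⟫) (y x : V) :
    αAB * ‖y‖ ^ 2 + αDB * ‖x‖ ^ 2 ≤ ⟪A y, y⟫ + ⟪B x, y⟫ + ⟪B y, x⟫ + ⟪D x, x⟫ := by
  have hsplit : ⟪A y, y⟫ + ⟪B x, y⟫ + ⟪B y, x⟫ + ⟪D x, x⟫
      = ⟪(A + B) y, y⟫ + ⟪(D + B) x, x⟫ + ⟪(-B) (y - x), y - x⟫ := by
    simp only [add_apply, neg_apply, map_sub, inner_add_left, inner_neg_left, inner_sub_left,
      inner_sub_right]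
    ring
  linarith [hAB y, hDB x, hB (y - x)]

theorem gaussSeidel_energy_step {A B D L : V →L[ℝ] V} {αAB αDB αA αL : ℝ}
    (hαDB : 0 < αDB) (hαA : 0 < αA) (hαL : 0 ≤ αL)
    (hAB : ∀ x, αAB * ‖x‖ ^ 2 ≤ ⟪(A + B) x, x⟫) (hDB : ∀ x, αDB * ‖x‖ ^ 2 ≤ ⟪(D + B) x, x⟫)
    (hB : ∀ x, 0 ≤ ⟪(-B) x, x⟫) (hA : ∀ x, αA * ‖x‖ ^ 2 ≤ ⟪A x, x⟫)
    (hLsymm : (L : V →ₗ[ℝ] V).IsSymmetric) (hL : ∀ x, αL * ‖x‖ ^ 2 ≤ ⟪L x, x⟫)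
    (hcond : ‖B‖ ^ 4 / (αDB * αA ^ 2) ≤ αL) {y y' x x' : V}
    (h₁ : A y + B x = 0) (h₁' : A y' + B x' = 0) (h₂ : B y' + D x + L (x - x') = 0) :
    ⟪L x, x⟫ + αDB * ‖x‖ ^ 2 + 2 * αAB * ‖y‖ ^ 2 ≤ ⟪L x', x'⟫ := by
  set c := ‖B‖ ^ 2 / αA
  have hc : c ^ 2 ≤ αL * αDB := by
    have : c ^ 2 = ‖B‖ ^ 4 / (αDB * αA ^ 2) * αDB := by simp only [c]; field_simp
    rw [this]
    gcongr
  have hlag : αA * ‖y - y'‖ ≤ ‖B‖ * ‖x - x'‖ :=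
    calc αA * ‖y - y'‖ ≤ ‖A (y - y')‖ := mul_norm_le_norm_apply_of_coercive_s14 hA _
      _ = ‖B (x - x')‖ := by
        rw [map_sub, eq_neg_of_add_eq_zero_left h₁, eq_neg_of_add_eq_zero_left h₁', neg_sub_neg,
          norm_sub_rev, map_sub]
      _ ≤ ‖B‖ * ‖x - x'‖ := B.le_opNorm _
  have hcross : ⟪B (y - y'), x⟫ ≤ c * ‖x - x'‖ * ‖x‖ :=
    calc ⟪B (y - y'), x⟫ ≤ ‖B‖ * ‖y - y'‖ * ‖x‖ :=
          (real_inner_le_norm _ _).trans (by gcongr; exact B.le_opNorm _)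
      _ ≤ ‖B‖ * (‖B‖ / αA * ‖x - x'‖) * ‖x‖ := by
          gcongr
          rwa [div_mul_eq_mul_div, le_div_iff₀' hαA]
      _ = c * ‖x - x'‖ * ‖x‖ := by ring
  have hyoung := two_mul_mul_mul_le_of_sq_le_mul hαL hαDB.le hc ‖x - x'‖ ‖x‖
  have htested : ⟪A y, y⟫ + ⟪B x, y⟫ + ⟪B y, x⟫ + ⟪D x, x⟫ + ⟪L (x - x'), x⟫
      = ⟪B (y - y'), x⟫ := by
    have e₁ : ⟪A y + B x, y⟫ = 0 := by rw [h₁, inner_zero_left]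
    have e₂ : ⟪B y' + D x + L (x - x'), x⟫ = 0 := by rw [h₂, inner_zero_left]
    simp only [inner_add_left, map_sub, inner_sub_left] at e₁ e₂ ⊢
    linarith
  have hpolar := hLsymm.two_mul_inner_map_sub x x'
  simp only [ContinuousLinearMap.coe_coe] at hpolar
  linarith [add_inner_le_block_form hAB hDB hB y x, hL (x - x')]

end

theorem caseCeqB_gaussSeidel_converges_general
    {V : Type*} [NormedAddCommGroup V] [InnerProductSpace ℝ V]
    (A B D L : V →L[ℝ] V)
    (αAB αDB αB αA αL : ℝ)
    (hαAB : 0 < αAB) (hαDB : 0 < αDB) (hαB : 0 < αB) (hαA : 0 < αA) (hαL : 0 < αL)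
    (hAB : ∀ x : V, ⟪(A + B) x, x⟫ ≥ αAB * ‖x‖ ^ 2)
    (hDB : ∀ x : V, ⟪(D + B) x, x⟫ ≥ αDB * ‖x‖ ^ 2)
    (hB : ∀ x : V, ⟪(-B) x, x⟫ ≥ αB * ‖x‖ ^ 2)
    (hA : ∀ x : V, ⟪A x, x⟫ ≥ αA * ‖x‖ ^ 2)
    (hLsa : ∀ x y : V, ⟪L x, y⟫ = ⟪x, L y⟫)
    (hL : ∀ x : V, ⟪L x, x⟫ ≥ αL * ‖x‖ ^ 2)
    (hcond : αL ≥ ‖B‖ ^ 4 / (αDB * αA ^ 2))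
    (f₁ f₂ uex vex : V)
    (hex1 : A uex + B vex = f₁)
    (hex2 : B uex + D vex = f₂)
    (u v : ℕ → V)
    (hit1 : ∀ k : ℕ, A (u (k + 1)) + B (v (k + 1)) = f₁)
    (hit2 : ∀ k : ℕ, B (u k) + D (v (k + 1)) + L (v (k + 1) - v k) = f₂) :
    Filter.Tendsto u Filter.atTop (nhds uex) ∧
    Filter.Tendsto v Filter.atTop (nhds vex) := by
  have herr₁ (k : ℕ) : A (u (k + 1) - uex) + B (v (k + 1) - vex) = 0 := by
    rw [map_sub, map_sub, sub_add_sub_comm, hit1, hex1, sub_self]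
  have herr₂ (k : ℕ) :
      B (u k - uex) + D (v (k + 1) - vex) + L ((v (k + 1) - vex) - (v k - vex)) = 0 := by
    rw [sub_sub_sub_cancel_right, ← sub_eq_zero.mpr ((hit2 k).trans hex2.symm)]
    simp only [map_sub]
    abel
  have hB₀ (x : V) : 0 ≤ ⟪(-B) x, x⟫ := (by positivity : 0 ≤ αB * ‖x‖ ^ 2).trans (hB x)
  set E : ℕ → ℝ := fun k => ⟪L (v (k + 1) - vex), v (k + 1) - vex⟫
  have hE (k : ℕ) : 0 ≤ E k := (by positivity : 0 ≤ αL * _).trans (hL _)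
  have hstep (k : ℕ) :
      E (k + 1) + αDB * ‖v (k + 2) - vex‖ ^ 2 + 2 * αAB * ‖u (k + 2) - uex‖ ^ 2 ≤ E k :=
    gaussSeidel_energy_step hαDB hαA hαL.le hAB hDB hB₀ hA hLsa hL hcond (herr₁ (k + 1))
      (herr₁ k) (herr₂ (k + 1))
  constructor
  · rw [← tendsto_sub_nhds_zero_iff, ← tendsto_add_atTop_iff_nat 2]
    refine tendsto_zero_of_add_mul_sq_norm_le hE (by positivity : 0 < 2 * αAB) fun k => ?_
    linarith [hstep k, (by positivity : 0 ≤ αDB * ‖v (k + 2) - vex‖ ^ 2)]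
  · rw [← tendsto_sub_nhds_zero_iff, ← tendsto_add_atTop_iff_nat 2]
    refine tendsto_zero_of_add_mul_sq_norm_le hE hαDB fun k => ?_
    linarith [hstep k, (by positivity : 0 ≤ 2 * αAB * ‖u (k + 2) - uex‖ ^ 2)]

/-- Convergence of the stabilized Gauss–Seidel iteration in the case `C = B` (all
operators acting on the same space `V`): if `A + B` and `D + B` are coercive, `−B` is
coercive and `B` bounded, `A` is coercive, and `L` is self-adjoint and coercive with
`αL ≥ ‖B‖⁴/(α_{D+B} αA²)`, then the iteration `Au^{k+1} + Bv^{k+1} = f₁`,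
`Bu^k + Dv^{k+1} + L(v^{k+1} − v^k) = f₂` converges to the exact solution. -/
theorem caseCeqB_gaussSeidel_converges
    {V : Type*} [NormedAddCommGroup V] [InnerProductSpace ℝ V] [CompleteSpace V]
    (A B D L : V →L[ℝ] V)
    (αAB αDB αB αA αL : ℝ)
    (hαAB : 0 < αAB) (hαDB : 0 < αDB) (hαB : 0 < αB) (hαA : 0 < αA) (hαL : 0 < αL)
    (hAB : ∀ x : V, ⟪(A + B) x, x⟫ ≥ αAB * ‖x‖ ^ 2)
    (hDB : ∀ x : V, ⟪(D + B) x, x⟫ ≥ αDB * ‖x‖ ^ 2)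
    (hB : ∀ x : V, ⟪(-B) x, x⟫ ≥ αB * ‖x‖ ^ 2)
    (hA : ∀ x : V, ⟪A x, x⟫ ≥ αA * ‖x‖ ^ 2)
    (hLsa : ∀ x y : V, ⟪L x, y⟫ = ⟪x, L y⟫)
    (hL : ∀ x : V, ⟪L x, x⟫ ≥ αL * ‖x‖ ^ 2)
    (hcond : αL ≥ ‖B‖ ^ 4 / (αDB * αA ^ 2))
    (f₁ f₂ uex vex : V)
    (hex1 : A uex + B vex = f₁)
    (hex2 : B uex + D vex = f₂)
    (u v : ℕ → V)
    (hit1 : ∀ k : ℕ, A (u (k + 1)) + B (v (k + 1)) = f₁)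
    (hit2 : ∀ k : ℕ, B (u k) + D (v (k + 1)) + L (v (k + 1) - v k) = f₂) :
    Filter.Tendsto u Filter.atTop (nhds uex) ∧
    Filter.Tendsto v Filter.atTop (nhds vex) :=
  caseCeqB_gaussSeidel_converges_general A B D L αAB αDB αB αA αL hαAB hαDB hαB hαA hαL hAB hDB hB
    hA hLsa hL hcond f₁ f₂ uex vex hex1 hex2 u v hit1 hit2
end
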